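/- Equilibrium invariance of the arboreal distribution: if G is a finite strongly connected reversible graph satisfying the cycle condition, then for all vertices i, j and every T ∈ Θ_i, Pr_{Θ_j}(Φ_{i,j}(T)) = Pr_{Θ_i}(T), where Pr_{Θ_k}(T) = q(T)/∑_{T'∈Θ_k} q(T') and Φ_{i,j} is the tree-reversal bijection. -/

import Mathlib

open Finset

attribute [local instance] Classical.propDecidable

/-- `i → j` is an edge of the graph when its label is positive. -/
def IsEdge {n : ℕ} (ℓ : Fin n → Fin n → ℝ) (i j : Fin n) : Prop := 0 < ℓ i j

/-- Strong connectivity: any two vertices are joined by a directed path of edges. -/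
def StronglyConnected {n : ℕ} (ℓ : Fin n → Fin n → ℝ) : Prop :=
  ∀ i j : Fin n, Relation.ReflTransGen (IsEdge ℓ) i j

/-- Reversibility: `i → j` is an edge iff `j → i` is. -/
def Reversible {n : ℕ} (ℓ : Fin n → Fin n → ℝ) : Prop :=
  ∀ i j : Fin n, 0 < ℓ i j ↔ 0 < ℓ j i

/-- The Laplacian matrix: `L j i = ℓ i j` off the diagonal,
`L i i = -∑_{k ≠ i} ℓ i k`. -/
noncomputable def graphLaplacian {n : ℕ} (ℓ : Fin n → Fin n → ℝ) :
    Matrix (Fin n) (Fin n) ℝ :=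
  fun j i => if j = i then -∑ k ∈ univ.filter (· ≠ i), ℓ i k else ℓ i j

/-- A spanning tree rooted at `r`, encoded as a parent map `t`: the root is fixed,
every other vertex has a positively-labelled edge to its parent, and iterating
the parent map from any vertex reaches the root. -/
def IsSpanningTree {n : ℕ} (ℓ : Fin n → Fin n → ℝ) (r : Fin n)
    (t : Fin n → Fin n) : Prop :=
  t r = r ∧ (∀ v, v ≠ r → 0 < ℓ v (t v)) ∧ ∀ v, ∃ k, t^[k] v = r

/-- `Θ_r`: the set of spanning trees rooted at `r`. -/
noncomputable def Trees {n : ℕ} (ℓ : Fin n → Fin n → ℝ) (r : Fin n) :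
    Finset (Fin n → Fin n) :=
  univ.filter (IsSpanningTree ℓ r)

/-- `q(T)`: the product of the edge labels over the edges of the tree. -/
noncomputable def treeWeight {n : ℕ} (ℓ : Fin n → Fin n → ℝ) (r : Fin n)
    (t : Fin n → Fin n) : ℝ :=
  ∏ v ∈ univ.filter (· ≠ r), ℓ v (t v)

/-- A directed path from `i` to `j`, as the list of visited vertices. -/
def IsPathFrom {n : ℕ} (ℓ : Fin n → Fin n → ℝ) (i j : Fin n)
    (p : List (Fin n)) : Prop :=
  p.Chain' (IsEdge ℓ) ∧ p.head? = some i ∧ p.getLast? = some j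

/-- A minimal (self-avoiding) path from `i` to `j`: all vertices distinct. -/
def IsMinPathFrom {n : ℕ} (ℓ : Fin n → Fin n → ℝ) (i j : Fin n)
    (p : List (Fin n)) : Prop :=
  IsPathFrom ℓ i j p ∧ p.Nodup

/-- `S(P)`: the action / entropy change of a path, the sum of
`log (ℓ(a→b)/ℓ(b→a))` over its consecutive pairs `a → b`. -/
noncomputable def pathAction {n : ℕ} (ℓ : Fin n → Fin n → ℝ)
    (p : List (Fin n)) : ℝ :=
  ((p.zip p.tail).map (fun e => Real.log (ℓ e.1 e.2 / ℓ e.2 e.1))).sum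

/-- `q(P)`: the product of the labels over the edges of a path. -/
noncomputable def pathWeight {n : ℕ} (ℓ : Fin n → Fin n → ℝ)
    (p : List (Fin n)) : ℝ :=
  ((p.zip p.tail).map (fun e => ℓ e.1 e.2)).prod

/-- The path from `i` to the root `r` along the parent map `t` (fuel `k`). -/
def treePathAux {n : ℕ} (t : Fin n → Fin n) (r : Fin n) :
    ℕ → Fin n → List (Fin n)
  | 0, i => [i]
  | k + 1, i => if i = r then [i] else i :: treePathAux t r k (t i)

/-- `T_i`: the unique path from `i` to the root `r` on the spanning tree `t`. -/
def treePath {n : ℕ} (t : Fin n → Fin n) (r : Fin n) (i : Fin n) :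
    List (Fin n) :=
  treePathAux t r n i

/-- The cycle condition: `S(C) = 0` for every directed cycle `C`
(a directed path whose first and last vertices agree). -/
def CycleCondition {n : ℕ} (ℓ : Fin n → Fin n → ℝ) : Prop :=
  ∀ p : List (Fin n), p.Chain' (IsEdge ℓ) → p.head? = p.getLast? →
    pathAction ℓ p = 0

/-- The tree-reversal map `Φ_{r,j}`: given a tree `t` rooted at `r`, reverse the
edges on the unique tree path from `j` to `r`, obtaining a tree rooted at `j`. -/
def reverseTree {n : ℕ} (t : Fin n → Fin n) (r j : Fin n) : Fin n → Fin n :=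
  fun v =>
    (((treePath t r j).zip (treePath t r j).tail).find? (fun e => e.2 == v)).elim
      (if v = j then j else t v) (fun e => e.1)

/-!
Reversing the tree path from `j` to the root `i` turns a tree rooted at `i` into one rooted at `j`,
and reversing the new path from `i` to `j` gives the original tree back, so `Φ_{i,j}` is a bijection
`Θ_i → Θ_j`. Only the path edges change, each `a → b` becoming `b → a`, whence
`q(Φ_{i,j}(T)) = exp(-S(T_j)) q(T)`. Two tree paths from `j` to `i`, the second one run backwards,
close up into a cycle, so by the cycle condition `S(T_j)` does not depend on `T`: all weights are
rescaled by the same factor, which cancels in the normalised ratio.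
-/

section Iterate

variable {α : Type*} {t : α → α} {r j : α} {d : ℕ}

def IsDepth (t : α → α) (r j : α) (d : ℕ) : Prop :=
  t^[d] j = r ∧ ∀ k < d, t^[k] j ≠ r

lemma exists_isDepth (h : ∃ k, t^[k] j = r) : ∃ d, IsDepth t r j d :=
  ⟨Nat.find h, Nat.find_spec h, fun _ hk => Nat.find_min h hk⟩

namespace IsDepth

lemma iterate_ne (hd : IsDepth t r j d) {a b : ℕ} (hab : a < b) (hb : b ≤ d) :
    t^[a] j ≠ t^[b] j := by
  intro h
  apply hd.2 (d - b + a) (by omega)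
  rw [Function.iterate_add_apply, h, ← Function.iterate_add_apply, Nat.sub_add_cancel hb, hd.1]

lemma injOn_iterate (hd : IsDepth t r j d) : Set.InjOn (t^[·] j) (range (d + 1)) := by
  intro a ha b hb hab
  simp only [coe_range, Set.mem_Iio] at ha hb
  by_contra hne
  rcases Nat.lt_or_gt_of_ne hne with h | h
  · exact hd.iterate_ne h (by omega) hab
  · exact hd.iterate_ne h (by omega) hab.symm

lemma succ_le_card [Fintype α] (hd : IsDepth t r j d) : d + 1 ≤ Fintype.card α := by
  simpa using card_le_card_of_injOn _ (fun _ _ => mem_univ _) hd.injOn_iterate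

lemma of_succ (hd : IsDepth t r j (d + 1)) : IsDepth t r (t j) d :=
  ⟨hd.1, fun k hk => hd.2 (k + 1) (by omega)⟩

end IsDepth

lemma exists_iterate_eq_of_eqOn_compl {t' : α → α} {P : Set α}
    (heq : ∀ v ∉ P, t' v = t v) (hP : ∀ v ∈ P, ∃ k, t'^[k] v = j) {v : α}
    (hv : ∃ k, t^[k] v ∈ P) : ∃ k, t'^[k] v = j := by
  obtain ⟨k, hk⟩ := hv
  induction k generalizing v with
  | zero => exact hP v hk
  | succ k ih =>
    by_cases hvP : v ∈ P
    · exact hP v hvP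
    · obtain ⟨k', hk'⟩ := ih hk
      exact ⟨k' + 1, by rwa [Function.iterate_succ_apply, heq v hvP]⟩

lemma zip_tail_map_range (f : ℕ → α) (m : ℕ) :
    ((List.range (m + 1)).map f).zip ((List.range (m + 1)).map f).tail =
      (List.range m).map fun k => (f k, f (k + 1)) := by
  apply List.ext_getElem <;> simp [List.getElem_zip]

end Iterate

section TreePath

variable {n : ℕ} {t : Fin n → Fin n} {r j : Fin n} {d : ℕ}

namespace IsDepth

lemma treePathAux_eq {fuel : ℕ} (hd : IsDepth t r j d) (hfuel : d ≤ fuel) :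
    treePathAux t r fuel j = (List.range (d + 1)).map (t^[·] j) := by
  induction d generalizing j fuel with
  | zero =>
    have hj : j = r := hd.1
    cases fuel <;> simp [treePathAux, hj]
  | succ d ih =>
    obtain ⟨fuel, rfl⟩ : ∃ f, fuel = f + 1 := ⟨fuel - 1, by omega⟩
    have hj : j ≠ r := hd.2 0 (by omega)
    rw [treePathAux, if_neg hj, ih hd.of_succ (by omega), List.range_succ_eq_map]
    simp [Function.comp_def, Function.iterate_succ_apply]

lemma treePath_eq (hd : IsDepth t r j d) :
    treePath t r j = (List.range (d + 1)).map (t^[·] j) :=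
  hd.treePathAux_eq (by simpa using hd.succ_le_card : d < n).le

lemma zip_tail_treePath (hd : IsDepth t r j d) :
    (treePath t r j).zip (treePath t r j).tail =
      (List.range d).map fun k => (t^[k] j, t^[k + 1] j) := by
  rw [hd.treePath_eq, zip_tail_map_range]

lemma reverseTree_iterate_succ (hd : IsDepth t r j d) {s : ℕ} (hs : s < d) :
    reverseTree t r j (t^[s + 1] j) = t^[s] j := by
  have hfind : (List.range d).find? (fun k => t^[k + 1] j == t^[s + 1] j) = some s := by
    refine List.find?_range_eq_some.2 ⟨by simp, List.mem_range.2 hs, fun k hk => ?_⟩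
    simpa using hd.iterate_ne (by omega : k + 1 < s + 1) (by omega)
  simp only [reverseTree, hd.zip_tail_treePath, List.find?_map, Function.comp_def, hfind]
  rfl

lemma reverseTree_of_forall_ne (hd : IsDepth t r j d) {v : Fin n}
    (hv : ∀ k < d, t^[k + 1] j ≠ v) : reverseTree t r j v = if v = j then j else t v := by
  have hfind : (List.range d).find? (fun k => t^[k + 1] j == v) = none :=
    List.find?_range_eq_none.2 fun k hk => by simpa using hv k hk
  simp only [reverseTree, hd.zip_tail_treePath, List.find?_map, Function.comp_def, hfind]
  rfl

lemma reverseTree_self (hd : IsDepth t r j d) : reverseTree t r j j = j := by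
  have hv : ∀ k < d, t^[k + 1] j ≠ j := fun k hk h =>
    hd.iterate_ne (Nat.succ_pos k) hk (by simpa using h.symm)
  rw [hd.reverseTree_of_forall_ne hv, if_pos rfl]

lemma reverseTree_of_forall_le_ne (hd : IsDepth t r j d) {v : Fin n}
    (hv : ∀ k ≤ d, t^[k] j ≠ v) : reverseTree t r j v = t v := by
  rw [hd.reverseTree_of_forall_ne fun k hk => hv (k + 1) hk,
    if_neg fun h => hv 0 (Nat.zero_le d) h.symm]

lemma reverseTree_iterate (hd : IsDepth t r j d) {k : ℕ} (hk : k ≤ d) :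
    (reverseTree t r j)^[k] r = t^[d - k] j := by
  induction k with
  | zero => simp [hd.1]
  | succ k ih =>
    rw [Function.iterate_succ_apply', ih (by omega), show d - k = d - (k + 1) + 1 by omega,
      hd.reverseTree_iterate_succ (by omega)]

lemma isDepth_reverseTree (hd : IsDepth t r j d) : IsDepth (reverseTree t r j) j r d := by
  refine ⟨by simpa using hd.reverseTree_iterate le_rfl, fun k hk h => ?_⟩
  rw [hd.reverseTree_iterate hk.le] at h
  exact hd.iterate_ne (by omega : 0 < d - k) (by omega) (by simpa using h.symm)

lemma reverseTree_iterate_iterate (hd : IsDepth t r j d) {k : ℕ} (hk : k ≤ d) :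
    (reverseTree t r j)^[k] (t^[k] j) = j := by
  have h := hd.isDepth_reverseTree.1
  rwa [← Nat.add_sub_cancel' hk, Function.iterate_add_apply,
    hd.reverseTree_iterate (Nat.sub_le d k), Nat.sub_sub_self hk] at h

end IsDepth

lemma reverseTree_reverseTree (hr : t r = r) (hj : ∃ k, t^[k] j = r) :
    reverseTree (reverseTree t r j) j r = t := by
  obtain ⟨d, hd⟩ := exists_isDepth hj
  have hd' := hd.isDepth_reverseTree
  funext v
  by_cases hv : ∃ k ≤ d, t^[k] j = v
  · obtain ⟨k, hk, rfl⟩ := hv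
    rcases hk.lt_or_eq with hk | rfl
    · have h := hd'.reverseTree_iterate_succ (s := d - k - 1) (by omega)
      rw [hd.reverseTree_iterate (by omega), hd.reverseTree_iterate (by omega),
        show d - (d - k - 1 + 1) = k by omega, show d - (d - k - 1) = k + 1 by omega] at h
      rw [h, Function.iterate_succ_apply']
    · rw [hd.1, hd'.reverseTree_self, hr]
  · push Not at hv
    have hv' : ∀ k ≤ d, (reverseTree t r j)^[k] r ≠ v := fun k hk => by
      rw [hd.reverseTree_iterate hk]
      exact hv _ (Nat.sub_le d k)
    rw [hd'.reverseTree_of_forall_le_ne hv', hd.reverseTree_of_forall_le_ne hv]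

end TreePath

section SpanningTree

variable {n : ℕ} {ℓ : Fin n → Fin n → ℝ} {t : Fin n → Fin n} {r j : Fin n} {d : ℕ}

lemma mem_Trees : t ∈ Trees ℓ r ↔ IsSpanningTree ℓ r t := by
  simp [Trees]

lemma IsSpanningTree.isEdge_iterate (ht : IsSpanningTree ℓ r t) (hd : IsDepth t r j d) {k : ℕ}
    (hk : k < d) : IsEdge ℓ (t^[k] j) (t^[k + 1] j) := by
  rw [Function.iterate_succ_apply']
  exact ht.2.1 _ (hd.2 k hk)

lemma isSpanningTree_reverseTree (ht : IsSpanningTree ℓ r t) (hrev : Reversible ℓ) (j : Fin n) :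
    IsSpanningTree ℓ j (reverseTree t r j) := by
  obtain ⟨d, hd⟩ := exists_isDepth (ht.2.2 j)
  set P : Set (Fin n) := {v | ∃ k ≤ d, t^[k] j = v}
  have hoff : ∀ v ∉ P, reverseTree t r j v = t v := fun v hv =>
    hd.reverseTree_of_forall_le_ne fun k hk h => hv ⟨k, hk, h⟩
  refine ⟨hd.reverseTree_self, fun v hvj => ?_, fun v => ?_⟩
  · by_cases hvP : v ∈ P
    · obtain ⟨_ | s, hs, rfl⟩ := hvP
      · exact absurd rfl hvj
      · rw [hd.reverseTree_iterate_succ hs]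
        exact (hrev _ _).1 (ht.isEdge_iterate hd hs)
    · rw [hoff v hvP]
      exact ht.2.1 v fun h => hvP ⟨d, le_rfl, hd.1.trans h.symm⟩
  · refine exists_iterate_eq_of_eqOn_compl hoff ?_ ?_
    · rintro _ ⟨k, hk, rfl⟩
      exact ⟨k, hd.reverseTree_iterate_iterate hk⟩
    · obtain ⟨k, hk⟩ := ht.2.2 v
      exact ⟨k, d, le_rfl, hd.1.trans hk.symm⟩

lemma sum_trees_eq_sum_reverseTree {β : Type*} [AddCommMonoid β] (hrev : Reversible ℓ)
    (i j : Fin n) (f : (Fin n → Fin n) → β) :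
    ∑ t ∈ Trees ℓ j, f t = ∑ t ∈ Trees ℓ i, f (reverseTree t i j) := by
  symm
  refine sum_nbij' (reverseTree · i j) (reverseTree · j i) (fun t ht => ?_) (fun t ht => ?_)
    (fun t ht => ?_) (fun t ht => ?_) fun _ _ => rfl
  all_goals rw [mem_Trees] at ht
  · exact mem_Trees.2 (isSpanningTree_reverseTree ht hrev j)
  · exact mem_Trees.2 (isSpanningTree_reverseTree ht hrev i)
  · exact reverseTree_reverseTree ht.1 (ht.2.2 j)
  · exact reverseTree_reverseTree ht.1 (ht.2.2 i)

end SpanningTree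

section EdgeAction

variable {α : Type*} (ℓ : α → α → ℝ)

noncomputable def edgeAction (a b : α) : ℝ :=
  Real.log (ℓ a b / ℓ b a)

lemma edgeAction_swap (a b : α) : edgeAction ℓ b a = -edgeAction ℓ a b := by
  rw [edgeAction, edgeAction, ← Real.log_inv, inv_div]

variable {ℓ} in
lemma exp_neg_edgeAction_mul {a b : α} (hab : 0 < ℓ a b) (hba : 0 < ℓ b a) :
    Real.exp (-edgeAction ℓ a b) * ℓ a b = ℓ b a := by
  rw [edgeAction, Real.exp_neg, Real.exp_log (div_pos hab hba), inv_div,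
    div_mul_cancel₀ _ hab.ne']

end EdgeAction

section Action

variable {n : ℕ} {ℓ : Fin n → Fin n → ℝ}

lemma pathAction_map_range (f : ℕ → Fin n) (m : ℕ) :
    pathAction ℓ ((List.range (m + 1)).map f) =
      ∑ k ∈ range m, edgeAction ℓ (f k) (f (k + 1)) := by
  rw [pathAction, zip_tail_map_range, List.map_map]
  rfl

lemma isChain_map_range {f : ℕ → Fin n} {m : ℕ} :
    List.IsChain (IsEdge ℓ) ((List.range (m + 1)).map f) ↔
      ∀ k < m, IsEdge ℓ (f k) (f (k + 1)) := by
  rw [List.isChain_map, List.isChain_range_succ]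

lemma CycleCondition.sum_edgeAction_eq (hcc : CycleCondition ℓ) (hrev : Reversible ℓ)
    {p q : ℕ → Fin n} {m m' : ℕ} (hp : ∀ k < m, IsEdge ℓ (p k) (p (k + 1)))
    (hq : ∀ k < m', IsEdge ℓ (q k) (q (k + 1))) (h0 : p 0 = q 0) (hm : p m = q m') :
    ∑ k ∈ range m, edgeAction ℓ (p k) (p (k + 1)) =
      ∑ k ∈ range m', edgeAction ℓ (q k) (q (k + 1)) := by
  -- `f` runs along `p` from `p 0` to `p m = q m'`, then backwards along `q` to `q 0 = p 0`.
  set f : ℕ → Fin n := fun k => if k ≤ m then p k else q (m + m' - k)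
  have hfp : ∀ k ≤ m, f k = p k := fun k hk => if_pos hk
  have hfq : ∀ k ≤ m', f (m + k) = q (m' - k) := by
    rintro (_ | k) hk
    · simpa [hfp m le_rfl] using hm
    · exact (if_neg (by omega)).trans (by congr 1; omega)
  have hchain : List.IsChain (IsEdge ℓ) ((List.range (m + m' + 1)).map f) := by
    refine isChain_map_range.2 fun k hk => ?_
    rcases Nat.lt_or_ge k m with hkm | hkm
    · rw [hfp k hkm.le, hfp (k + 1) hkm]
      exact hp k hkm
    · obtain ⟨s, rfl⟩ := Nat.exists_eq_add_of_le hkm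
      rw [hfq s (by omega), add_assoc, hfq (s + 1) (by omega),
        show m' - s = m' - (s + 1) + 1 by omega]
      exact (hrev _ _).1 (hq _ (by omega))
  have hclosed : f (m + m') = f 0 := by
    rw [hfq m' le_rfl, hfp 0 (Nat.zero_le m), h0, Nat.sub_self]
  have hcycle := hcc _ hchain (by simp [List.head?_range, List.getLast?_range, hclosed])
  rw [pathAction_map_range, sum_range_add] at hcycle
  have hforward : ∑ k ∈ range m, edgeAction ℓ (f k) (f (k + 1)) =
      ∑ k ∈ range m, edgeAction ℓ (p k) (p (k + 1)) :=
    sum_congr rfl fun k hk => by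
      rw [mem_range] at hk
      rw [hfp k hk.le, hfp (k + 1) hk]
  have hbackward : ∑ k ∈ range m', edgeAction ℓ (f (m + k)) (f (m + k + 1)) =
      -∑ k ∈ range m', edgeAction ℓ (q k) (q (k + 1)) := by
    rw [← sum_range_reflect, ← sum_neg_distrib]
    refine sum_congr rfl fun k hk => ?_
    rw [mem_range] at hk
    rw [hfq _ (by omega), add_assoc, hfq _ (by omega), show m' - (m' - 1 - k) = k + 1 by omega,
      show m' - (m' - 1 - k + 1) = k by omega, edgeAction_swap]
  linarith

end Action

section Weight

variable {n : ℕ} {ℓ : Fin n → Fin n → ℝ} {t : Fin n → Fin n} {r j : Fin n} {d : ℕ}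

namespace IsDepth

lemma pathAction_treePath (hd : IsDepth t r j d) :
    pathAction ℓ (treePath t r j) =
      ∑ k ∈ range d, edgeAction ℓ (t^[k] j) (t^[k + 1] j) := by
  rw [hd.treePath_eq, pathAction_map_range]

lemma treeWeight_eq (hd : IsDepth t r j d) :
    treeWeight ℓ r t = (∏ k ∈ range d, ℓ (t^[k] j) (t^[k + 1] j)) *
      ∏ v ∈ ((range (d + 1)).image (t^[·] j))ᶜ, ℓ v (t v) := by
  rw [treeWeight, prod_filter, ← prod_mul_prod_compl ((range (d + 1)).image (t^[·] j)),
    prod_image hd.injOn_iterate, prod_range_succ, if_neg (not_not.2 hd.1), mul_one]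
  congr 1
  · refine prod_congr rfl fun k hk => ?_
    rw [if_pos (hd.2 k (mem_range.1 hk)), Function.iterate_succ_apply']
  · refine prod_congr rfl fun v hv => if_pos ?_
    rintro rfl
    exact mem_compl.1 hv (mem_image.2 ⟨d, self_mem_range_succ d, hd.1⟩)

lemma treeWeight_reverseTree_eq (hd : IsDepth t r j d) :
    treeWeight ℓ j (reverseTree t r j) = (∏ k ∈ range d, ℓ (t^[k + 1] j) (t^[k] j)) *
      ∏ v ∈ ((range (d + 1)).image (t^[·] j))ᶜ, ℓ v (t v) := by
  rw [treeWeight, prod_filter, ← prod_mul_prod_compl ((range (d + 1)).image (t^[·] j)),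
    prod_image hd.injOn_iterate, prod_range_succ', Function.iterate_zero_apply,
    if_neg (not_not.2 rfl), mul_one]
  congr 1
  · refine prod_congr rfl fun k hk => ?_
    have hk := mem_range.1 hk
    have hne : t^[k + 1] j ≠ j := (hd.iterate_ne (Nat.succ_pos k) hk).symm
    rw [if_pos hne, hd.reverseTree_iterate_succ hk]
  · refine prod_congr rfl fun v hv => ?_
    have hv : ∀ k ≤ d, t^[k] j ≠ v := fun k hk h =>
      mem_compl.1 hv (mem_image.2 ⟨k, mem_range.2 (Nat.lt_succ_of_le hk), h⟩)
    rw [if_pos fun h => hv 0 (Nat.zero_le d) h.symm, hd.reverseTree_of_forall_le_ne hv]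

end IsDepth

lemma treeWeight_reverseTree (ht : IsSpanningTree ℓ r t) (hrev : Reversible ℓ) (j : Fin n) :
    treeWeight ℓ j (reverseTree t r j) =
      Real.exp (-pathAction ℓ (treePath t r j)) * treeWeight ℓ r t := by
  obtain ⟨d, hd⟩ := exists_isDepth (ht.2.2 j)
  rw [hd.treeWeight_reverseTree_eq, hd.treeWeight_eq, hd.pathAction_treePath, ← mul_assoc,
    ← sum_neg_distrib, Real.exp_sum, ← prod_mul_distrib]
  congr 1
  refine prod_congr rfl fun k hk => ?_
  have he := ht.isEdge_iterate hd (mem_range.1 hk)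
  exact (exp_neg_edgeAction_mul he ((hrev _ _).1 he)).symm

lemma CycleCondition.pathAction_treePath_eq (hcc : CycleCondition ℓ) (hrev : Reversible ℓ)
    {t' : Fin n → Fin n} (ht : IsSpanningTree ℓ r t) (ht' : IsSpanningTree ℓ r t')
    (j : Fin n) :
    pathAction ℓ (treePath t r j) = pathAction ℓ (treePath t' r j) := by
  obtain ⟨d, hd⟩ := exists_isDepth (ht.2.2 j)
  obtain ⟨d', hd'⟩ := exists_isDepth (ht'.2.2 j)
  rw [hd.pathAction_treePath, hd'.pathAction_treePath]
  exact hcc.sum_edgeAction_eq hrev (fun _ => ht.isEdge_iterate hd) (fun _ => ht'.isEdge_iterate hd')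
    rfl (hd.1.trans hd'.1.symm)

end Weight

theorem arboreal_invariance_general {n : ℕ} (ℓ : Fin n → Fin n → ℝ) (hrev : Reversible ℓ)
    (hcc : CycleCondition ℓ) (i j : Fin n) (T : Fin n → Fin n) (hT : T ∈ Trees ℓ i) :
    treeWeight ℓ j (reverseTree T i j) / (∑ T' ∈ Trees ℓ j, treeWeight ℓ j T') =
      treeWeight ℓ i T / (∑ T' ∈ Trees ℓ i, treeWeight ℓ i T') := by
  set c := Real.exp (-pathAction ℓ (treePath T i j))
  have hweight : ∀ T' ∈ Trees ℓ i,
      treeWeight ℓ j (reverseTree T' i j) = c * treeWeight ℓ i T' := by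
    intro T' hT'
    rw [treeWeight_reverseTree (mem_Trees.1 hT') hrev,
      hcc.pathAction_treePath_eq hrev (mem_Trees.1 hT') (mem_Trees.1 hT)]
  rw [sum_trees_eq_sum_reverseTree hrev i j, sum_congr rfl hweight, ← mul_sum, hweight T hT]
  exact mul_div_mul_left _ _ (Real.exp_ne_zero _)

/-- Equilibrium invariance of the arboreal distribution: under the cycle
condition, `Pr_{Θ_j}(Φ_{i,j}(T)) = Pr_{Θ_i}(T)` for every tree `T ∈ Θ_i`. -/
theorem arboreal_invariance {n : ℕ} (ℓ : Fin n → Fin n → ℝ)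
    (hℓ : ∀ i j, 0 ≤ ℓ i j) (hsc : StronglyConnected ℓ) (hrev : Reversible ℓ)
    (hcc : CycleCondition ℓ) (i j : Fin n) (T : Fin n → Fin n)
    (hT : T ∈ Trees ℓ i) :
    treeWeight ℓ j (reverseTree T i j) / (∑ T' ∈ Trees ℓ j, treeWeight ℓ j T') =
      treeWeight ℓ i T / (∑ T' ∈ Trees ℓ i, treeWeight ℓ i T') :=
  arboreal_invariance_general ℓ hrev hcc i j T hT
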